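/- arXiv:1008.3213 — 5 statements merged into one kernel-verified Lean document; each statement's English description precedes it below -/
import Mathlib

section
/- Let G be a finite simple graph with a probability weight function μ on its vertices. If every independent set I of G satisfies μ(I) ≤ μ(N(I)), then every subset Q of V(G) satisfies μ(Q) ≤ μ(N(Q)), where N(Q) denotes the set of vertices adjacent to at least one vertex of Q. -/
/-!
The vertices of `Q` with no neighbour in `Q` form an independent set `A = Q \ N(Q)`. Its
neighbourhood `N(A)` misses `Q`, so `N(Q)` contains the disjoint union `N(A) ∪ (Q ∩ N(Q))`, whence
`μ(N(Q)) ≥ μ(N(A)) + μ(Q ∩ N(Q)) ≥ μ(A) + μ(Q ∩ N(Q)) = μ(Q)`.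
-/

open Finset Filter

/-- `I` is an independent set of vertices in `G`. -/
def IsIndepSet {V : Type*} (G : SimpleGraph V) (I : Finset V) : Prop :=
  ∀ u ∈ I, ∀ v ∈ I, ¬ G.Adj u v

/-- The neighborhood `N(I)`: vertices adjacent to at least one vertex of `I`. -/
noncomputable def nbhd {V : Type*} [Fintype V] (G : SimpleGraph V) (I : Finset V) : Finset V :=
  @Finset.filter _ (fun v => ∃ u ∈ I, G.Adj u v) (Classical.decPred _) Finset.univ

/-- Measure of a finite set of vertices: sum of the weights. -/
def fmeas {V : Type*} (μ : V → ℝ) (S : Finset V) : ℝ := ∑ v ∈ S, μ v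

/-- The `n`-fold tensor (categorical) power of `G`. -/
def tpow {V : Type*} (G : SimpleGraph V) (n : ℕ) : SimpleGraph (Fin n → V) where
  Adj u v := u ≠ v ∧ ∀ i, G.Adj (u i) (v i)
  symm := ⟨fun u v h => ⟨h.1.symm, fun i => (h.2 i).symm⟩⟩
  loopless := ⟨fun u h => h.1 rfl⟩

/-- Product measure of a set of `n`-tuples. -/
noncomputable def pmeas {V : Type*} (μ : V → ℝ) (n : ℕ) (S : Finset (Fin n → V)) : ℝ :=
  ∑ x ∈ S, ∏ i, μ (x i)

/-- `ᾱ(G)`: the supremum (= maximum) of the measures of independent sets of `G`. -/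
noncomputable def alphaBar {V : Type*} (G : SimpleGraph V) (μ : V → ℝ) : ℝ :=
  sSup {x : ℝ | ∃ I : Finset V, IsIndepSet G I ∧ x = fmeas μ I}

/-- `ᾱ(G^n)` with the product measure. -/
noncomputable def alphaPow {V : Type*} (G : SimpleGraph V) (μ : V → ℝ) (n : ℕ) : ℝ :=
  alphaBar (tpow G n) (fun x => ∏ i, μ (x i))

section Neighbourhood

variable {V : Type*} [Fintype V] (G : SimpleGraph V)

@[simp]
lemma mem_nbhd {S : Finset V} {v : V} : v ∈ nbhd G S ↔ ∃ u ∈ S, G.Adj u v := by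
  simp [nbhd]

lemma nbhd_mono {S T : Finset V} (h : S ⊆ T) : nbhd G S ⊆ nbhd G T := fun v hv => by
  obtain ⟨u, hu, huv⟩ := (mem_nbhd G).1 hv
  exact (mem_nbhd G).2 ⟨u, h hu, huv⟩

lemma isIndepSet_sdiff_nbhd [DecidableEq V] (Q : Finset V) : IsIndepSet G (Q \ nbhd G Q) := by
  intro u hu v hv huv
  exact (Finset.mem_sdiff.1 hv).2 ((mem_nbhd G).2 ⟨u, (Finset.mem_sdiff.1 hu).1, huv⟩)

lemma disjoint_nbhd_sdiff_nbhd [DecidableEq V] (Q : Finset V) :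
    Disjoint (nbhd G (Q \ nbhd G Q)) Q := by
  refine disjoint_left.2 fun v hv hvQ => ?_
  obtain ⟨u, hu, huv⟩ := (mem_nbhd G).1 hv
  exact (Finset.mem_sdiff.1 hu).2 ((mem_nbhd G).2 ⟨v, hvQ, huv.symm⟩)

end Neighbourhood

section Measure

variable {V : Type*} {μ : V → ℝ}

lemma fmeas_union [DecidableEq V] {S T : Finset V} (h : Disjoint S T) :
    fmeas μ (S ∪ T) = fmeas μ S + fmeas μ T :=
  sum_union h

lemma fmeas_sdiff_add_fmeas_inter [DecidableEq V] (S T : Finset V) :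
    fmeas μ (S \ T) + fmeas μ (S ∩ T) = fmeas μ S := by
  rw [add_comm]
  exact sum_inter_add_sum_sdiff S T μ

lemma fmeas_mono (hμ : ∀ v, 0 ≤ μ v) {S T : Finset V} (h : S ⊆ T) : fmeas μ S ≤ fmeas μ T :=
  sum_le_sum_of_subset_of_nonneg h fun v _ _ => hμ v

end Measure

theorem stmt_0_general {V : Type*} [Fintype V] (G : SimpleGraph V) (μ : V → ℝ)
    (hμ0 : ∀ v, 0 ≤ μ v)
    (hI : ∀ I : Finset V, IsIndepSet G I → fmeas μ I ≤ fmeas μ (nbhd G I)) :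
    ∀ Q : Finset V, fmeas μ Q ≤ fmeas μ (nbhd G Q) := by
  classical
  intro Q
  set A := Q \ nbhd G Q
  have hdisj : Disjoint (nbhd G A) (Q ∩ nbhd G Q) :=
    (disjoint_nbhd_sdiff_nbhd G Q).mono_right inter_subset_left
  calc fmeas μ Q = fmeas μ A + fmeas μ (Q ∩ nbhd G Q) := (fmeas_sdiff_add_fmeas_inter Q _).symm
    _ ≤ fmeas μ (nbhd G A) + fmeas μ (Q ∩ nbhd G Q) := by
      gcongr
      exact hI A (isIndepSet_sdiff_nbhd G Q)
    _ = fmeas μ (nbhd G A ∪ (Q ∩ nbhd G Q)) := (fmeas_union hdisj).symm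
    _ ≤ fmeas μ (nbhd G Q) :=
      fmeas_mono hμ0 (union_subset (nbhd_mono G sdiff_subset) inter_subset_right)

theorem stmt_0 {V : Type*} [Fintype V] (G : SimpleGraph V) (μ : V → ℝ)
    (hμ0 : ∀ v, 0 ≤ μ v) (hμ1 : ∑ v, μ v = 1)
    (hI : ∀ I : Finset V, IsIndepSet G I → fmeas μ I ≤ fmeas μ (nbhd G I)) :
    ∀ Q : Finset V, fmeas μ Q ≤ fmeas μ (nbhd G Q) :=
  stmt_0_general G μ hμ0 hI
end

section
/- Let G be a finite simple graph with probability weights μ, and suppose there is an independent set I with μ(I) > μ(N(I)). Let U = V(G) \ (I ∪ N(I)) and let m_n denote the maximum μ-measure (product measure) of an independent set in the n-th tensor power G^n. Then m_n ≥ μ(I) + μ(U)·m_{n-1} for all n ≥ 2. -/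
open Finset Filter

/-!
Let `U = V \ (I ∪ N(I))` and let `J` be a maximum independent set of `G^(n-1)`. The tuples `x`
with `x₀ ∈ I`, together with those with `x₀ ∈ U` and tail in `J`, are independent in `G^n`: `I`
is independent, no edge joins `I` to `U`, and coordinatewise adjacent tails of length `n - 1 ≥ 1`
are distinct, hence adjacent in `G^(n-1)`. As the weights sum to `1`, this set has product
measure `μ(I) + μ(U) m_{n-1}`.
-/

section AlphaBar

variable {V : Type*} [Fintype V] (G : SimpleGraph V) (μ : V → ℝ)

lemma finite_indepSet_measures :
    {x : ℝ | ∃ I : Finset V, IsIndepSet G I ∧ x = fmeas μ I}.Finite :=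
  (Set.finite_range (fmeas μ)).subset fun _ ⟨J, _, hx⟩ => ⟨J, hx.symm⟩

lemma exists_isIndepSet_alphaBar_eq : ∃ J : Finset V, IsIndepSet G J ∧ alphaBar G μ = fmeas μ J :=
  Set.Nonempty.csSup_mem (s := {x : ℝ | ∃ I : Finset V, IsIndepSet G I ∧ x = fmeas μ I})
    ⟨fmeas μ ∅, ∅, by simp [IsIndepSet], rfl⟩ (finite_indepSet_measures G μ)

lemma fmeas_le_alphaBar {J : Finset V} (hJ : IsIndepSet G J) : fmeas μ J ≤ alphaBar G μ :=
  le_csSup (finite_indepSet_measures G μ).bddAbove ⟨J, hJ, rfl⟩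

end AlphaBar

section TensorPower

variable {V : Type*} {m : ℕ}

def consEmb (V : Type*) (m : ℕ) : V × (Fin m → V) ↪ (Fin (m + 1) → V) :=
  (Fin.consEquiv fun _ => V).toEmbedding

@[simp]
lemma consEmb_apply (p : V × (Fin m → V)) : consEmb V m p = Fin.cons p.1 p.2 :=
  rfl

lemma tpow_adj_cons_iff {G : SimpleGraph V} (hm : m ≠ 0) {a b : V} {y z : Fin m → V} :
    (tpow G (m + 1)).Adj (Fin.cons a y) (Fin.cons b z) ↔ G.Adj a b ∧ (tpow G m).Adj y z := by
  obtain ⟨k, rfl⟩ := Nat.exists_eq_succ_of_ne_zero hm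
  simp only [tpow, Fin.forall_fin_succ, Fin.cons_zero, Fin.cons_succ, ne_eq]
  constructor
  · rintro ⟨-, hab, hyz0, hyz⟩
    exact ⟨hab, by rintro rfl; exact G.irrefl hyz0, hyz0, hyz⟩
  · rintro ⟨hab, -, hyz0, hyz⟩
    exact ⟨fun h => G.ne_of_adj hab (congrFun h 0), hab, hyz0, hyz⟩

lemma pmeas_map_product (μ : V → ℝ) (A : Finset V) (B : Finset (Fin m → V)) :
    pmeas μ (m + 1) ((A ×ˢ B).map (consEmb V m)) = fmeas μ A * pmeas μ m B := by
  rw [pmeas, pmeas, fmeas, sum_map, consEmb, sum_product, sum_mul]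
  simp [Fin.prod_univ_succ, mul_sum]

lemma pmeas_univ [Fintype V] (μ : V → ℝ) : pmeas μ m univ = (∑ v, μ v) ^ m :=
  (Fintype.sum_pow μ m).symm

lemma pmeas_union [DecidableEq V] (μ : V → ℝ) {S T : Finset (Fin m → V)} (h : Disjoint S T) :
    pmeas μ m (S ∪ T) = pmeas μ m S + pmeas μ m T :=
  sum_union h

lemma isIndepSet_map_consEmb_union [Fintype V] [DecidableEq V] {G : SimpleGraph V} (hm : m ≠ 0)
    {I U : Finset V} {J : Finset (Fin m → V)} (hI : IsIndepSet G I)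
    (hIU : ∀ a ∈ I, ∀ b ∈ U, ¬ G.Adj a b) (hJ : IsIndepSet (tpow G m) J) :
    IsIndepSet (tpow G (m + 1)) ((I ×ˢ univ ∪ U ×ˢ J).map (consEmb V m)) := by
  simp only [IsIndepSet, forall_mem_map, Prod.forall, mem_union, mem_product, mem_univ,
    and_true, consEmb_apply, tpow_adj_cons_iff hm]
  rintro a y (ha | ⟨ha, hy⟩) b z (hb | ⟨hb, hz⟩) ⟨hab, hyz⟩
  · exact hI a ha b hb hab
  · exact hIU a ha b hb hab
  · exact hIU b hb a ha hab.symm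
  · exact hJ y hy z hz hyz

end TensorPower

theorem stmt_1_general {V : Type*} [Fintype V] [DecidableEq V] (G : SimpleGraph V) (μ : V → ℝ)
    (hμ1 : ∑ v, μ v = 1)
    (I : Finset V) (hI : IsIndepSet G I) :
    ∀ n : ℕ, 2 ≤ n →
      alphaPow G μ n ≥
        fmeas μ I + fmeas μ (Finset.univ \ (I ∪ nbhd G I)) * alphaPow G μ (n - 1) := by
  intro n hn
  obtain ⟨m, rfl⟩ : ∃ m, n = m + 1 := ⟨n - 1, by omega⟩
  set U := univ \ (I ∪ nbhd G I)
  obtain ⟨J, hJ, hJmax⟩ := exists_isIndepSet_alphaBar_eq (tpow G m) fun x => ∏ i, μ (x i)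
  replace hJmax : alphaPow G μ m = pmeas μ m J := hJmax
  have hIU : ∀ a ∈ I, ∀ b ∈ U, ¬ G.Adj a b := fun a ha b hb hab =>
    (mem_sdiff.1 hb).2 (mem_union_right _ (by simpa [nbhd] using ⟨a, ha, hab⟩))
  have hdisj : Disjoint (I ×ˢ univ) (U ×ˢ J) :=
    disjoint_product.2 (Or.inl (disjoint_sdiff.mono_left subset_union_left))
  calc fmeas μ I + fmeas μ U * alphaPow G μ (m + 1 - 1)
      = pmeas μ (m + 1) ((I ×ˢ univ ∪ U ×ˢ J).map (consEmb V m)) := by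
        rw [map_union, pmeas_union μ ((Finset.disjoint_map _).2 hdisj), pmeas_map_product,
          pmeas_map_product, pmeas_univ, hμ1, one_pow, mul_one, Nat.add_sub_cancel, hJmax]
    _ ≤ alphaPow G μ (m + 1) := fmeas_le_alphaBar _ _ (isIndepSet_map_consEmb_union (by omega) hI hIU hJ)

theorem stmt_1 {V : Type*} [Fintype V] [DecidableEq V] (G : SimpleGraph V) (μ : V → ℝ)
    (hμ0 : ∀ v, 0 ≤ μ v) (hμ1 : ∑ v, μ v = 1)
    (I : Finset V) (hI : IsIndepSet G I)
    (hgt : fmeas μ I > fmeas μ (nbhd G I)) :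
    ∀ n : ℕ, 2 ≤ n →
      alphaPow G μ n ≥
        fmeas μ I + fmeas μ (Finset.univ \ (I ∪ nbhd G I)) * alphaPow G μ (n - 1) :=
  stmt_1_general G μ hμ1 I hI
end

section
/- Let G be a finite simple graph with probability weights μ, and let ᾱ(G^n) denote the maximum product measure of an independent set in the n-th tensor power G^n. If lim_{n→∞} ᾱ(G^n) > 1/2, then lim_{n→∞} ᾱ(G^n) = 1. -/
open Finset Filter

/-! If an independent set `I` of `G^n` has measure `p > 1/2`, cut the coordinates of `G^{2tn}`
into `2t` blocks of length `n` and keep the tuples with more than `t` blocks in `I`. Two such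
tuples share a block lying in `I`, so they are not adjacent. The discarded tuples form a binomial
tail, bounded by `(4p(1-p))^t` because `p^m (1-p)^(2t-m) ≤ (p(1-p))^t` for `m ≤ t`. Hence
`ᾱ(G^{2tn}) ≥ 1 - (4p(1-p))^t → 1`. -/

section AlphaBar

variable {W : Type*} {H : SimpleGraph W} {w : W → ℝ}

lemma isIndepSet_empty (H : SimpleGraph W) : IsIndepSet H ∅ := by
  simp [IsIndepSet]

lemma le_alphaBar [Fintype W] {I : Finset W} (hI : IsIndepSet H I) :
    fmeas w I ≤ alphaBar H w :=
  le_csSup ((Set.finite_range (fmeas w)).subset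
    (by rintro _ ⟨I, -, rfl⟩; exact ⟨I, rfl⟩)).bddAbove ⟨I, hI, rfl⟩

lemma alphaBar_le {a : ℝ} (h : ∀ I, IsIndepSet H I → fmeas w I ≤ a) : alphaBar H w ≤ a :=
  csSup_le ⟨_, ∅, isIndepSet_empty H, rfl⟩ (by rintro _ ⟨I, hI, rfl⟩; exact h I hI)

lemma exists_isIndepSet_lt_fmeas {a : ℝ} (h : a < alphaBar H w) :
    ∃ I, IsIndepSet H I ∧ a < fmeas w I := by
  obtain ⟨_, ⟨I, hI, rfl⟩, haI⟩ :=
    exists_lt_of_lt_csSup (by exact ⟨_, ∅, isIndepSet_empty H, rfl⟩) h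
  exact ⟨I, hI, haI⟩

lemma fmeas_nonneg (hw : ∀ v, 0 ≤ w v) (I : Finset W) : 0 ≤ fmeas w I :=
  sum_nonneg fun v _ => hw v

lemma fmeas_le_fmeas_univ [Fintype W] (hw : ∀ v, 0 ≤ w v) (I : Finset W) :
    fmeas w I ≤ fmeas w univ :=
  sum_le_sum_of_subset_of_nonneg (subset_univ I) fun v _ _ => hw v

lemma alphaBar_le_fmeas_univ [Fintype W] (hw : ∀ v, 0 ≤ w v) : alphaBar H w ≤ fmeas w univ :=
  alphaBar_le fun I _ => fmeas_le_fmeas_univ hw I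

lemma alphaPow_le_one [Fintype W] (hw : ∀ z, 0 ≤ w z) (hw1 : ∑ z, w z = 1) (n : ℕ) :
    alphaPow H w n ≤ 1 := by
  refine (alphaBar_le_fmeas_univ fun z => prod_nonneg fun i _ => hw (z i)).trans_eq ?_
  rw [fmeas, ← Fintype.sum_pow, hw1, one_pow]

end AlphaBar

section Majority

variable {W : Type*} [Fintype W] [DecidableEq W]

def majoritySet (I : Finset W) (k : ℕ) : Finset (Fin k → W) :=
  {y | k < 2 * #{j | y j ∈ I}}

lemma isIndepSet_majoritySet {H : SimpleGraph W} {I : Finset W} (hI : IsIndepSet H I) (k : ℕ) :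
    IsIndepSet (tpow H k) (majoritySet I k) := by
  intro x hx y hy hxy
  simp only [majoritySet, mem_filter, mem_univ, true_and] at hx hy
  obtain ⟨j, hj⟩ := inter_nonempty_of_card_lt_card_add_card (subset_univ _) (subset_univ _)
    (by rw [card_univ, Fintype.card_fin]; omega :
      #(univ : Finset (Fin k)) < #{j | x j ∈ I} + #{j | y j ∈ I})
  simp only [mem_inter, mem_filter, mem_univ, true_and] at hj
  exact hI _ hj.1 _ hj.2 (hxy.2 j)

lemma sum_prod_eq_pow_mul_pow (w : W → ℝ) (I : Finset W) {k : ℕ} (S : Finset (Fin k)) :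
    ∑ y : Fin k → W with ({j | y j ∈ I} : Finset (Fin k)) = S, ∏ j, w (y j) =
      fmeas w I ^ #S * fmeas w Iᶜ ^ (k - #S) := by
  have hfiber : ({y | ({j | y j ∈ I} : Finset (Fin k)) = S} : Finset (Fin k → W)) =
      Fintype.piFinset fun j => if j ∈ S then I else Iᶜ := by
    ext y
    simp only [mem_filter, mem_univ, true_and, Fintype.mem_piFinset, Finset.ext_iff]
    refine forall_congr' fun j => ?_
    split_ifs with hj <;> simp [hj]
  rw [hfiber, ← prod_univ_sum]
  simp only [apply_ite (fun s => ∑ z ∈ s, w z), prod_ite, prod_const]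
  rw [filter_mem_eq_inter, univ_inter, filter_not, filter_mem_eq_inter, univ_inter,
    ← compl_eq_univ_sdiff, card_compl, Fintype.card_fin]
  rfl

lemma sum_prod_filter_card_eq (w : W → ℝ) (I : Finset W) (k : ℕ) (P : ℕ → Prop)
    [DecidablePred P] :
    ∑ y : Fin k → W with P #{j | y j ∈ I}, ∏ j, w (y j) =
      ∑ S : Finset (Fin k) with P #S, fmeas w I ^ #S * fmeas w Iᶜ ^ (k - #S) := by
  rw [← sum_fiberwise_of_maps_to (g := fun y => ({j | y j ∈ I} : Finset (Fin k)))
    (t := {S | P #S}) (by simp)]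
  refine sum_congr rfl fun S hS => ?_
  rw [← sum_prod_eq_pow_mul_pow, filter_filter]
  refine sum_congr (filter_congr fun y _ => ?_) fun _ _ => rfl
  simp only [mem_filter, mem_univ, true_and] at hS
  exact ⟨And.right, fun h => ⟨h ▸ hS, h⟩⟩

lemma pow_mul_pow_le_mul_pow {p q : ℝ} (hq : 0 ≤ q) (hqp : q ≤ p) {m t : ℕ}
    (hmt : m ≤ t) : p ^ m * q ^ (2 * t - m) ≤ (p * q) ^ t := by
  obtain ⟨d, rfl⟩ := Nat.exists_eq_add_of_le hmt
  have hp : 0 ≤ p := hq.trans hqp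
  rw [show 2 * (m + d) - m = m + d + d by omega, pow_add, pow_add]
  calc p ^ m * (q ^ m * q ^ d * q ^ d) ≤ p ^ m * (q ^ m * q ^ d * p ^ d) := by
        gcongr
    _ = (p * q) ^ (m + d) := by ring

lemma sum_prod_minority_le {w : W → ℝ} (hw : ∀ z, 0 ≤ w z) {I : Finset W}
    (hIc : fmeas w Iᶜ ≤ fmeas w I) (t : ℕ) :
    ∑ y : Fin (2 * t) → W with #{j | y j ∈ I} ≤ t, ∏ j, w (y j) ≤
      (4 * fmeas w I * fmeas w Iᶜ) ^ t := by
  have hpq : 0 ≤ fmeas w I * fmeas w Iᶜ := mul_nonneg (fmeas_nonneg hw I) (fmeas_nonneg hw Iᶜ)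
  refine (sum_prod_filter_card_eq w I (2 * t) (· ≤ t)).trans_le ?_
  calc _ ≤ ∑ S : Finset (Fin (2 * t)) with #S ≤ t, (fmeas w I * fmeas w Iᶜ) ^ t :=
        sum_le_sum fun S hS =>
          pow_mul_pow_le_mul_pow (fmeas_nonneg hw Iᶜ) hIc (mem_filter.1 hS).2
    _ ≤ ∑ S : Finset (Fin (2 * t)), (fmeas w I * fmeas w Iᶜ) ^ t :=
        sum_le_sum_of_subset_of_nonneg (filter_subset _ _) fun _ _ _ => pow_nonneg hpq t
    _ = (4 * fmeas w I * fmeas w Iᶜ) ^ t := by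
        rw [sum_const, card_univ, Fintype.card_finset, Fintype.card_fin, nsmul_eq_mul]
        push_cast
        rw [pow_mul, mul_assoc, mul_pow 4]
        norm_num

lemma one_sub_le_fmeas_majoritySet {w : W → ℝ} (hw : ∀ z, 0 ≤ w z) (hw1 : ∑ z, w z = 1)
    {I : Finset W} (hI : 1 / 2 ≤ fmeas w I) (t : ℕ) :
    1 - (4 * fmeas w I * (1 - fmeas w I)) ^ t ≤
      fmeas (fun y => ∏ j, w (y j)) (majoritySet I (2 * t)) := by
  have hIc : fmeas w Iᶜ = 1 - fmeas w I := by
    rw [← hw1, ← sum_add_sum_compl I w, fmeas, fmeas]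
    ring
  have htotal : fmeas (fun y => ∏ j, w (y j)) (majoritySet I (2 * t)) +
      ∑ y : Fin (2 * t) → W with #{j | y j ∈ I} ≤ t, ∏ j, w (y j) = 1 := by
    rw [fmeas, majoritySet, ← one_pow (2 * t), ← hw1, Fintype.sum_pow,
      ← sum_filter_add_sum_filter_not univ fun y => 2 * t < 2 * #{j | y j ∈ I}]
    congr 2
    exact filter_congr fun y _ => by omega
  have hminority := sum_prod_minority_le hw (by linarith : fmeas w Iᶜ ≤ fmeas w I) t
  rw [hIc] at hminority
  linarith

end Majority

lemma one_sub_le_alphaPow {W : Type*} [Fintype W] {H : SimpleGraph W} {w : W → ℝ}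
    (hw : ∀ z, 0 ≤ w z) (hw1 : ∑ z, w z = 1) {I : Finset W} (hI : IsIndepSet H I)
    (hhalf : 1 / 2 ≤ fmeas w I) (t : ℕ) :
    1 - (4 * fmeas w I * (1 - fmeas w I)) ^ t ≤ alphaPow H w (2 * t) := by
  classical
  exact (one_sub_le_fmeas_majoritySet hw hw1 hhalf t).trans
    (le_alphaBar (isIndepSet_majoritySet hI _))


section Blocks

variable {V : Type*}

def blockEquiv (V : Type*) (k n : ℕ) : (Fin (k * n) → V) ≃ (Fin k → Fin n → V) :=
  (finProdFinEquiv.symm.arrowCongr (Equiv.refl V)).trans (Equiv.curry _ _ _)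

lemma blockEquiv_apply {k n : ℕ} (x : Fin (k * n) → V) (j : Fin k) (i : Fin n) :
    blockEquiv V k n x j i = x (finProdFinEquiv (j, i)) := rfl

lemma tpow_adj_blockEquiv {G : SimpleGraph V} {k n : ℕ} {x y : Fin (k * n) → V}
    (h : (tpow G (k * n)).Adj x y) :
    (tpow (tpow G n) k).Adj (blockEquiv V k n x) (blockEquiv V k n y) := by
  refine ⟨(blockEquiv V k n).injective.ne h.1, fun j => ⟨fun hj => ?_, fun i => h.2 _⟩⟩
  obtain ⟨m, -⟩ := Function.ne_iff.mp h.1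
  have := congrFun hj (finProdFinEquiv.symm m).2
  simp only [blockEquiv_apply] at this
  exact (h.2 _).ne this

lemma prod_blockEquiv (μ : V → ℝ) {k n : ℕ} (x : Fin (k * n) → V) :
    ∏ j, ∏ i, μ (blockEquiv V k n x j i) = ∏ m, μ (x m) := by
  simp only [blockEquiv_apply]
  rw [← Fintype.prod_prod_type' (fun j i => μ (x (finProdFinEquiv (j, i)))),
    Equiv.prod_comp finProdFinEquiv (fun m => μ (x m))]

lemma alphaPow_tpow_le [Fintype V] (G : SimpleGraph V) (μ : V → ℝ) (k n : ℕ) :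
    alphaPow (tpow G n) (fun z => ∏ i, μ (z i)) k ≤ alphaPow G μ (k * n) := by
  refine alphaBar_le fun M hM => ?_
  let e := blockEquiv V k n
  have hJ : IsIndepSet (tpow G (k * n)) (M.map e.symm.toEmbedding) := by
    simp only [IsIndepSet, mem_map_equiv, Equiv.symm_symm]
    exact fun x hx y hy hxy => hM _ hx _ hy (tpow_adj_blockEquiv hxy)
  calc fmeas _ M = fmeas (fun x => ∏ i, μ (x i)) (M.map e.symm.toEmbedding) := by
        simp only [fmeas, sum_map, Equiv.coe_toEmbedding, e, ← prod_blockEquiv μ,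
          Equiv.apply_symm_apply]
    _ ≤ alphaPow G μ (k * n) := le_alphaBar hJ

end Blocks

theorem stmt_3 {V : Type*} [Fintype V] (G : SimpleGraph V) (μ : V → ℝ)
    (hμ0 : ∀ v, 0 ≤ μ v) (hμ1 : ∑ v, μ v = 1)
    (L : ℝ) (hL : Tendsto (fun n => alphaPow G μ n) atTop (nhds L))
    (hgt : 1 / 2 < L) : L = 1 := by
  have hL1 : L ≤ 1 := le_of_tendsto' hL (alphaPow_le_one hμ0 hμ1)
  obtain ⟨n, hn, hn_half⟩ :=
    ((eventually_ge_atTop 1).and (hL.eventually (eventually_gt_nhds hgt))).exists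
  obtain ⟨I, hI, hI_half⟩ := exists_isIndepSet_lt_fmeas hn_half
  set p := fmeas (fun z : Fin n → V => ∏ i, μ (z i)) I
  have hw : ∀ z : Fin n → V, 0 ≤ ∏ i, μ (z i) := fun z => prod_nonneg fun i _ => hμ0 (z i)
  have hw1 : ∑ z : Fin n → V, ∏ i, μ (z i) = 1 := by rw [← Fintype.sum_pow, hμ1, one_pow]
  have hp1 : p ≤ 1 := hw1 ▸ fmeas_le_fmeas_univ hw I
  have hsub : Tendsto (fun t => alphaPow G μ (2 * t * n)) atTop (nhds L) :=
    hL.comp (tendsto_atTop_mono (fun t => show t ≤ 2 * t * n by nlinarith) tendsto_id)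
  have hlim : Tendsto (fun t => 1 - (4 * p * (1 - p)) ^ t) atTop (nhds 1) := by
    simpa using tendsto_const_nhds.sub
      (tendsto_pow_atTop_nhds_zero_of_lt_one (by nlinarith) (by nlinarith) : Tendsto
        (fun t : ℕ => (4 * p * (1 - p)) ^ t) atTop (nhds 0))
  refine le_antisymm hL1 (le_of_tendsto_of_tendsto' hlim hsub fun t => ?_)
  exact (one_sub_le_alphaPow hw hw1 hI hI_half.le t).trans (alphaPow_tpow_le G μ (2 * t) n)
end

section
/- Let H be a finite vertex transitive graph (its automorphism group acts transitively on vertices) with the uniform probability measure. Then for every positive integer n, the maximum fraction of vertices in an independent set of the tensor power H^n equals the independence ratio of H: ᾱ(H^n) = ᾱ(H). -/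
open Finset Filter

/-!
The theorem is an instance of the no-homomorphism lemma: if `f : G →g K` and `K` is vertex
transitive, then `ᾱ(G) ≥ ᾱ(K)`. Indeed, for an independent set `J` of `K`, each preimage
`f⁻¹(σ⁻¹ J)` with `σ ∈ Aut K` is independent in `G`, and averaging over `σ` (which moves any
vertex uniformly over `K`) shows that some preimage has measure at least that of `J`. Both `H`
and `H^n` are vertex transitive, and there are homomorphisms both ways: the diagonal
`H →g H^n` (for `n > 0`) and a coordinate projection `H^n →g H`.
-/

def IsVertexTransitive {V : Type*} (G : SimpleGraph V) : Prop :=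
  ∀ u v : V, ∃ φ : G ≃g G, φ u = v

instance SimpleGraph.Iso.finite {V W : Type*} [Finite V] [Finite W] {G : SimpleGraph V}
    {G' : SimpleGraph W} : Finite (G ≃g G') :=
  Finite.of_injective _ DFunLike.coe_injective

namespace IsVertexTransitive

variable {V W : Type*} {G : SimpleGraph V} {K : SimpleGraph W}

section Counting

variable [DecidableEq W] [Fintype (K ≃g K)]

theorem card_filter_apply_eq (hK : IsVertexTransitive K) (y w y' w' : W) :
    #{σ : K ≃g K | σ y = w} = #{σ : K ≃g K | σ y' = w'} := by
  obtain ⟨χ, hχ⟩ := hK y' y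
  obtain ⟨ψ, hψ⟩ := hK w' w
  refine card_bij' (fun σ _ => (χ.trans σ).trans ψ.symm) (fun σ _ => (χ.symm.trans σ).trans ψ)
    (fun σ hσ => by simp_all [← hψ]) (fun σ hσ => by simp_all [← hχ])
    (fun σ _ => by ext; simp) (fun σ _ => by ext; simp)

theorem card_filter_apply_mem_mul_card [Fintype W] (hK : IsVertexTransitive K) (y : W)
    (S : Finset W) :
    #{σ : K ≃g K | σ y ∈ S} * Fintype.card W = #S * Fintype.card (K ≃g K) := by
  have hfiber : ∀ w, #{σ : K ≃g K | σ y = w} = #{σ : K ≃g K | σ y = y} :=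
    fun w => hK.card_filter_apply_eq y w y y
  have hcard : Fintype.card (K ≃g K) = Fintype.card W * #{σ : K ≃g K | σ y = y} := by
    rw [← card_univ, card_eq_sum_card_fiberwise (f := fun σ : K ≃g K => σ y) (t := univ)
      (fun _ _ => mem_univ _)]
    simp only [hfiber, sum_const, card_univ, smul_eq_mul]
  rw [← sum_card_fiberwise_eq_card_filter, sum_congr rfl fun w _ => hfiber w, sum_const,
    smul_eq_mul, hcard]
  ring

end Counting

/-- The no-homomorphism lemma, in counting form. -/
theorem exists_indepSet_card_mul_le [Fintype V] [Fintype W] (hK : IsVertexTransitive K)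
    (f : G →g K) {J : Finset W} (hJ : IsIndepSet K J) :
    ∃ I : Finset V, IsIndepSet G I ∧ #J * Fintype.card V ≤ #I * Fintype.card W := by
  classical
  let := Fintype.ofFinite (K ≃g K)
  have hindep : ∀ σ : K ≃g K, IsIndepSet G {x | σ (f x) ∈ J} := by
    intro σ u hu v hv hadj
    simp only [mem_filter, mem_univ, true_and] at hu hv
    exact hJ _ hu _ hv (σ.map_rel_iff.mpr (f.map_adj hadj))
  have hsum : ∑ _σ : K ≃g K, #J * Fintype.card V
      = ∑ σ : K ≃g K, #{x | σ (f x) ∈ J} * Fintype.card W :=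
    calc ∑ _σ : K ≃g K, #J * Fintype.card V
        = ∑ _x : V, #J * Fintype.card (K ≃g K) := by
          simp only [sum_const, card_univ, smul_eq_mul]
          ring
      _ = ∑ x : V, #{σ : K ≃g K | σ (f x) ∈ J} * Fintype.card W :=
          sum_congr rfl fun x _ => (hK.card_filter_apply_mem_mul_card (f x) J).symm
      _ = ∑ σ : K ≃g K, #{x | σ (f x) ∈ J} * Fintype.card W := by
          simp only [card_filter, sum_mul]
          exact sum_comm
  obtain ⟨σ, -, hσ⟩ := exists_le_of_sum_le univ_nonempty hsum.le
  exact ⟨_, hindep σ, hσ⟩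

end IsVertexTransitive

theorem fmeas_const {V : Type*} (c : ℝ) (S : Finset V) : fmeas (fun _ => c) S = #S * c := by
  simp [fmeas]

theorem alphaBar_le_of_forall_exists {V W : Type*} [Finite W] {G : SimpleGraph V}
    {G' : SimpleGraph W} {μ : V → ℝ} {μ' : W → ℝ}
    (h : ∀ I, IsIndepSet G I → ∃ I', IsIndepSet G' I' ∧ fmeas μ I ≤ fmeas μ' I') :
    alphaBar G μ ≤ alphaBar G' μ' := by
  have hbdd : BddAbove {x : ℝ | ∃ I' : Finset W, IsIndepSet G' I' ∧ x = fmeas μ' I'} :=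
    ((Set.finite_range fun I' : Finset W => fmeas μ' I').subset <| by
      rintro _ ⟨I', -, rfl⟩
      exact ⟨I', rfl⟩).bddAbove
  unfold alphaBar
  refine csSup_le ⟨fmeas μ ∅, ∅, fun _ hu => absurd hu (notMem_empty _), rfl⟩ ?_
  rintro _ ⟨I, hI, rfl⟩
  obtain ⟨I', hI', hle⟩ := h I hI
  exact hle.trans (le_csSup hbdd ⟨I', hI', rfl⟩)

theorem alphaBar_uniform_le_of_hom {V W : Type*} [Fintype V] [Fintype W] [Nonempty V]
    {G : SimpleGraph V} {K : SimpleGraph W} (hK : IsVertexTransitive K) (f : G →g K) :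
    alphaBar K (fun _ => 1 / Fintype.card W) ≤ alphaBar G (fun _ => 1 / Fintype.card V) := by
  have : Nonempty W := .map f ‹_›
  refine alphaBar_le_of_forall_exists fun J hJ => ?_
  obtain ⟨I, hI, hcard⟩ := hK.exists_indepSet_card_mul_le f hJ
  refine ⟨I, hI, ?_⟩
  rw [fmeas_const, fmeas_const, mul_one_div, mul_one_div,
    div_le_div_iff₀ (by exact_mod_cast Fintype.card_pos) (by exact_mod_cast Fintype.card_pos)]
  exact_mod_cast hcard

section TensorPower

variable {V : Type*} (H : SimpleGraph V) {n : ℕ}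

def tpowDiag (hn : 0 < n) : H →g tpow H n where
  toFun x _ := x
  map_rel' hadj := ⟨fun h => hadj.ne (congrFun h ⟨0, hn⟩), fun _ => hadj⟩

def tpowEval (i : Fin n) : tpow H n →g H where
  toFun x := x i
  map_rel' hadj := hadj.2 i

variable {H}

def tpowPiCongr (φ : Fin n → H ≃g H) : tpow H n ≃g tpow H n where
  toEquiv := Equiv.piCongrRight fun i => (φ i).toEquiv
  map_rel_iff' := by
    simp only [tpow, ne_eq, (Equiv.piCongrRight fun i => (φ i).toEquiv).injective.eq_iff]
    exact and_congr_right fun _ => forall_congr' fun i => (φ i).map_rel_iff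

theorem IsVertexTransitive.tpow (hH : IsVertexTransitive H) :
    IsVertexTransitive (tpow H n) := by
  intro u v
  choose φ hφ using fun i => hH (u i) (v i)
  exact ⟨tpowPiCongr φ, funext hφ⟩

end TensorPower

theorem stmt_5 {V : Type*} [Fintype V] [Nonempty V] (H : SimpleGraph V)
    (htrans : ∀ u v : V, ∃ φ : H ≃g H, φ u = v)
    (n : ℕ) (hn : 0 < n) :
    alphaPow H (fun _ => (1 : ℝ) / Fintype.card V) n =
      alphaBar H (fun _ => (1 : ℝ) / Fintype.card V) := by
  have hunif : (fun _ : Fin n → V => ∏ _i : Fin n, (1 : ℝ) / Fintype.card V)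
      = fun _ => (1 : ℝ) / Fintype.card (Fin n → V) := by
    simp [prod_const]
  have htrans' : IsVertexTransitive (tpow H n) := IsVertexTransitive.tpow htrans
  rw [alphaPow, hunif]
  exact le_antisymm (alphaBar_uniform_le_of_hom htrans' (tpowDiag H hn))
    (alphaBar_uniform_le_of_hom htrans (tpowEval H ⟨0, hn⟩))
end

section
/- Let G be a finite graph with probability weights μ such that μ(I) ≤ μ(N(I)) for every independent set I. Then for every n, every independent set J of the tensor power G^n satisfies μ^{⊗n}(J) ≤ 1/2... equivalently, lim_{n→∞} ᾱ(G^n) ≤ 1/2. -/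
open Finset Filter

/-!
Call `μ(S) ≤ ν(N(S))` for all `S` the weighted Hall condition. For a graph it already follows
from the case of independent sets: `S \ N(S)` is independent and its neighbourhood lies in
`N(S) \ S`. It tensorizes: summing the condition on `G` fibre by fibre over the condition on
`G^n` gives it on `G^(n+1)`. An independent set `J` of `G^n` (`n ≥ 1`) is disjoint from
`N(J)`, so `2 μ(J) ≤ μ(J) + μ(N(J)) ≤ 1`.
-/

section Hall

variable {α β γ δ α' β' : Type*}

-- The same classical filter as in `nbhd`, so that `nbhd G I` is `relImage G.Adj I` by `rfl`.
noncomputable def relImage [Fintype β] (r : α → β → Prop) (S : Finset α) : Finset β :=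
  @Finset.filter _ (fun b => ∃ a ∈ S, r a b) (Classical.decPred _) Finset.univ

@[simp]
lemma mem_relImage [Fintype β] {r : α → β → Prop} {S : Finset α} {b : β} :
    b ∈ relImage r S ↔ ∃ a ∈ S, r a b := by
  classical
  simp [relImage]

def HallCondition [Fintype β] (r : α → β → Prop) (μ : α → ℝ) (ν : β → ℝ) : Prop :=
  ∀ S : Finset α, ∑ a ∈ S, μ a ≤ ∑ b ∈ relImage r S, ν b

namespace HallCondition

theorem prod [Fintype α] [Fintype β] [Fintype γ] [Fintype δ]
    {r : α → β → Prop} {s : γ → δ → Prop} {μ : α → ℝ} {ν : β → ℝ} {μ' : γ → ℝ} {ν' : δ → ℝ}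
    (hr : HallCondition r μ ν) (hs : HallCondition s μ' ν')
    (hμ : ∀ a, 0 ≤ μ a) (hν : ∀ b, 0 ≤ ν b) (hν' : ∀ d, 0 ≤ ν' d) :
    HallCondition (fun (x : α × γ) (y : β × δ) => r x.1 y.1 ∧ s x.2 y.2)
      (fun x => μ x.1 * μ' x.2) (fun y => ν y.1 * ν' y.2) := by
  classical
  intro S
  set T := relImage (fun (x : α × γ) (y : β × δ) => r x.1 y.1 ∧ s x.2 y.2) S
  set fiber : α → Finset γ := fun a => univ.filter fun c => (a, c) ∈ S
  set A : δ → Finset α := fun d => univ.filter fun a => d ∈ relImage s (fiber a)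
  have hA : ∀ d, relImage r (A d) ⊆ univ.filter fun b => (b, d) ∈ T := by
    intro d b hb
    obtain ⟨a, ha, hab⟩ := mem_relImage.1 hb
    obtain ⟨c, hc, hcd⟩ := mem_relImage.1 (mem_filter.1 ha).2
    exact mem_filter.2 ⟨mem_univ _, mem_relImage.2 ⟨(a, c), (mem_filter.1 hc).2, hab, hcd⟩⟩
  calc ∑ x ∈ S, μ x.1 * μ' x.2 = ∑ a, μ a * ∑ c ∈ fiber a, μ' c := by
        rw [sum_finset_product' S univ fiber (by simp [fiber]) (f := fun a c => μ a * μ' c)]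
        simp only [mul_sum]
    _ ≤ ∑ a, μ a * ∑ d ∈ relImage s (fiber a), ν' d := by
        gcongr with a
        exacts [hμ a, hs _]
    _ = ∑ d, ν' d * ∑ a ∈ A d, μ a := by
        simp only [mul_sum]
        rw [sum_comm' (t' := univ) (s' := A) (by simp [A])]
        simp only [mul_comm]
    _ ≤ ∑ d, ν' d * ∑ b ∈ relImage r (A d), ν b := by
        gcongr with d
        exacts [hν' d, hr _]
    _ ≤ ∑ d, ν' d * ∑ b ∈ univ.filter (fun b => (b, d) ∈ T), ν b := by
        refine sum_le_sum fun d _ => mul_le_mul_of_nonneg_left ?_ (hν' d)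
        exact sum_le_sum_of_subset_of_nonneg (hA d) fun b _ _ => hν b
    _ = ∑ y ∈ T, ν y.1 * ν' y.2 := by
        rw [sum_finset_product_right' T univ (fun d => univ.filter fun b => (b, d) ∈ T)
          (by simp) (f := fun b d => ν b * ν' d)]
        simp only [mul_sum, mul_comm]

theorem of_equiv [Fintype β] [Fintype β'] {r : α → β → Prop} {r' : α' → β' → Prop}
    {μ : α → ℝ} {ν : β → ℝ} {μ' : α' → ℝ} {ν' : β' → ℝ} (h : HallCondition r μ ν)
    (e : α ≃ α') (f : β ≃ β') (hr : ∀ a b, r' (e a) (f b) ↔ r a b)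
    (hμ : ∀ a, μ' (e a) = μ a) (hν : ∀ b, ν' (f b) = ν b) : HallCondition r' μ' ν' := by
  intro S
  calc ∑ a ∈ S, μ' a = ∑ a ∈ S.map e.symm.toEmbedding, μ a :=
        (sum_equiv e (by simp [mem_map_equiv]) (by simp [hμ])).symm
    _ ≤ ∑ b ∈ relImage r (S.map e.symm.toEmbedding), ν b := h _
    _ = ∑ b ∈ relImage r' S, ν' b := by
        refine sum_equiv f (fun b => ?_) (by simp [hν])
        simp only [mem_relImage, mem_map_equiv, Equiv.symm_symm]
        exact e.exists_congr fun a => by simp [hr]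

-- Unlike `tpow`, the relation has no `x ≠ y` clause: this makes it total for `n = 0`,
-- the base of the induction.
theorem pi [Fintype α] [Fintype β] {r : α → β → Prop} {μ : α → ℝ} {ν : β → ℝ}
    (h : HallCondition r μ ν) (hμ : ∀ a, 0 ≤ μ a) (hν : ∀ b, 0 ≤ ν b) :
    ∀ n : ℕ, HallCondition (fun (x : Fin n → α) (y : Fin n → β) => ∀ i, r (x i) (y i))
      (fun x => ∏ i, μ (x i)) (fun y => ∏ i, ν (y i))
  | 0 => by
      intro S
      rcases S.eq_empty_or_nonempty with rfl | hS
      · simp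
      · simp [hS.eq_univ, Finset.Nonempty]
  | n + 1 =>
      (h.prod (pi h hμ hν n) hμ hν fun _ => prod_nonneg fun i _ => hν _).of_equiv
        (Fin.consEquiv fun _ => α) (Fin.consEquiv fun _ => β) (by simp [Fin.forall_fin_succ])
        (by simp [Fin.prod_univ_succ]) (by simp [Fin.prod_univ_succ])

end HallCondition

lemma sum_le_half_of_disjoint_relImage [Fintype α] {r : α → α → Prop} {μ : α → ℝ}
    (hμ : ∀ a, 0 ≤ μ a) (hμ1 : ∑ a, μ a = 1) (h : HallCondition r μ μ) {J : Finset α}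
    (hJ : Disjoint J (relImage r J)) : ∑ a ∈ J, μ a ≤ 1 / 2 := by
  classical
  have hunion : ∑ a ∈ J, μ a + ∑ a ∈ relImage r J, μ a ≤ 1 := by
    rw [← sum_union hJ, ← hμ1]
    exact sum_le_univ_sum_of_nonneg hμ
  linarith [h J]

end Hall

section Graph

variable {V : Type*} [Fintype V] {G : SimpleGraph V}

lemma hallCondition_adj_of_isIndepSet {μ : V → ℝ} (hμ : ∀ v, 0 ≤ μ v)
    (hI : ∀ I : Finset V, IsIndepSet G I → fmeas μ I ≤ fmeas μ (nbhd G I)) :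
    HallCondition G.Adj μ μ := by
  classical
  intro S
  set T := relImage G.Adj S
  have hindep : IsIndepSet G (S \ T) := fun u hu v hv huv =>
    (Finset.mem_sdiff.1 hv).2 (mem_relImage.2 ⟨u, (Finset.mem_sdiff.1 hu).1, huv⟩)
  have hsub : relImage G.Adj (S \ T) ⊆ T \ S := by
    intro v hv
    obtain ⟨u, hu, huv⟩ := mem_relImage.1 hv
    rw [Finset.mem_sdiff] at hu ⊢
    exact ⟨mem_relImage.2 ⟨u, hu.1, huv⟩, fun hvS => hu.2 (mem_relImage.2 ⟨v, hvS, huv.symm⟩)⟩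
  have hdiff : ∑ v ∈ S \ T, μ v ≤ ∑ v ∈ T \ S, μ v :=
    (hI _ hindep).trans (sum_le_sum_of_subset_of_nonneg hsub fun v _ _ => hμ v)
  have hS_split := sum_inter_add_sum_sdiff S T μ
  have hT_split := sum_inter_add_sum_sdiff T S μ
  rw [inter_comm] at hT_split
  linarith

lemma disjoint_relImage_of_isIndepSet_tpow {n : ℕ} (hn : 1 ≤ n) {J : Finset (Fin n → V)}
    (hJ : IsIndepSet (tpow G n) J) :
    Disjoint J (relImage (fun x y : Fin n → V => ∀ i, G.Adj (x i) (y i)) J) := by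
  refine disjoint_left.2 fun y hy hyJ => ?_
  obtain ⟨x, hx, hxy⟩ := mem_relImage.1 hyJ
  exact hJ x hx y hy ⟨fun h => G.ne_of_adj (hxy ⟨0, hn⟩) (congrFun h _), hxy⟩

end Graph

theorem stmt_19 {V : Type*} [Fintype V] (G : SimpleGraph V) (μ : V → ℝ)
    (hμ0 : ∀ v, 0 ≤ μ v) (hμ1 : ∑ v, μ v = 1)
    (hI : ∀ I : Finset V, IsIndepSet G I → fmeas μ I ≤ fmeas μ (nbhd G I)) :
    (∀ n : ℕ, 1 ≤ n → ∀ J : Finset (Fin n → V),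
      IsIndepSet (tpow G n) J → pmeas μ n J ≤ 1 / 2) ∧
    (∀ L : ℝ, Tendsto (fun n => alphaPow G μ n) atTop (nhds L) → L ≤ 1 / 2) := by
  have hHall := (hallCondition_adj_of_isIndepSet hμ0 hI).pi hμ0 hμ0
  have hbound : ∀ n : ℕ, 1 ≤ n → ∀ J : Finset (Fin n → V),
      IsIndepSet (tpow G n) J → pmeas μ n J ≤ 1 / 2 := fun n hn J hJ =>
    sum_le_half_of_disjoint_relImage (fun x => prod_nonneg fun i _ => hμ0 (x i))
      (by rw [← Fintype.sum_pow, hμ1, one_pow]) (hHall n)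
      (disjoint_relImage_of_isIndepSet_tpow hn hJ)
  refine ⟨hbound, fun L hL => le_of_tendsto hL ?_⟩
  filter_upwards [eventually_ge_atTop 1] with n hn
  refine Real.sSup_le ?_ (by norm_num)
  rintro x ⟨I, hIndep, rfl⟩
  exact hbound n hn I hIndep
end
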